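/- There exists a universal constant C' > 0 with the following property. Let f^{(1)}, …, f^{(m)} ∈ ℝ^n be the frequency vectors of an insertion-only stream, let Z̄_1, …, Z̄_n be i.i.d. Rademacher random variables, and define Y_t = ∑_{j=1}^n Z̄_j f_j^{(t)} for t ∈ [m]. Then E[ sup_{t ∈ [m]} |Y_t| ] ≤ C' · ‖f^{(m)}‖₂. -/

import Mathlib

open MeasureTheory ProbabilityTheory
open scoped ENNReal

/-- The Euclidean (ℓ₂) norm of a vector in ℝ^k. -/
noncomputable def l2norm {k : ℕ} (x : Fin k → ℝ) : ℝ := Real.sqrt (∑ i, (x i) ^ 2)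

/-- The frequency vector at time `t` of the insertion-only stream `p` over universe `[n]`. -/
noncomputable def freq {n m : ℕ} (p : Fin m → Fin n) (t : ℕ) : Fin n → ℝ :=
  fun j => ((Finset.univ.filter fun t' : Fin m => (t' : ℕ) < t ∧ p t' = j).card : ℝ)

/-- The law of a Rademacher random variable: uniform on `{-1, +1}`. -/
noncomputable def radMeasure : Measure ℝ :=
  (2⁻¹ : ℝ≥0∞) • Measure.dirac (1 : ℝ) + (2⁻¹ : ℝ≥0∞) • Measure.dirac (-1 : ℝ)

/-!
A Rademacher sum `∑ⱼ Zⱼ aⱼ` is sub-Gaussian with variance proxy `‖a‖²`, since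
`cosh t ≤ exp (t² / 2)`; so by Jensen the expected maximum of the absolute values of `N` such sums
with `‖a‖ ≤ σ` is `O(σ (1 + log N))`. In an insertion-only stream the frequency vectors grow coordinatewise,
hence `‖f⁽ᵗ⁾ - f⁽ˢ⁾‖² ≤ g t - g s` for `s ≤ t`, where `g t = ‖f⁽ᵗ⁾‖²` is a clock that ticks by
at least `1` per insertion. Chain along this clock: at level `k`, move each time `s` up to the
last time before `g` leaves the grid cell of `g s` of mesh `g m / 4ᵏ`. Consecutive levels differ
by at most `g m / 4ᵏ` on the clock, level `k` has at most `4ᵏ⁺¹ + 1` distinct links, level `0`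
is the time `m`, and a deep enough level is `s` itself. So `Y_s` is `Y_m` plus one link per
level, and the level bounds `2⁻ᵏ (2k + 5) ‖f⁽ᵐ⁾‖₂` sum to `O(‖f⁽ᵐ⁾‖₂)`.
-/

open Real Finset
open scoped NNReal

section Subgaussian

variable {Ω : Type*} [MeasurableSpace Ω] {μ : Measure Ω}

protected lemma ProbabilityTheory.HasSubgaussianMGF.mono {X : Ω → ℝ} {c c' : ℝ≥0}
    (h : HasSubgaussianMGF X c μ) (hc : c ≤ c') : HasSubgaussianMGF X c' μ where
  integrable_exp_mul := h.integrable_exp_mul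
  mgf_le t := (h.mgf_le t).trans (exp_le_exp.2 (by gcongr))

lemma integral_radMeasure (g : ℝ → ℝ) : ∫ x, g x ∂radMeasure = (g 1 + g (-1)) / 2 := by
  rw [radMeasure, integral_add_measure
      ((integrable_dirac enorm_lt_top).smul_measure (by simp))
      ((integrable_dirac enorm_lt_top).smul_measure (by simp)),
    integral_smul_measure, integral_smul_measure, integral_dirac, integral_dirac]
  norm_num
  ring

lemma hasSubgaussianMGF_id_radMeasure : HasSubgaussianMGF id 1 radMeasure where
  integrable_exp_mul _ := ((integrable_dirac enorm_lt_top).smul_measure (by simp)).add_measure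
    ((integrable_dirac enorm_lt_top).smul_measure (by simp))
  mgf_le t := by
    rw [mgf, integral_radMeasure]
    simpa [← cosh_eq] using cosh_le_exp_half_sq t

lemma hasSubgaussianMGF_of_map_eq_radMeasure {X : Ω → ℝ} (hX : AEMeasurable X μ)
    (h : μ.map X = radMeasure) : HasSubgaussianMGF X 1 μ :=
  (HasSubgaussianMGF.id_map_iff hX).1 (h ▸ hasSubgaussianMGF_id_radMeasure)

lemma hasSubgaussianMGF_sum_mul {n : ℕ} {Z : Fin n → Ω → ℝ} (hmeas : ∀ i, Measurable (Z i))
    (hindep : iIndepFun Z μ) (hlaw : ∀ i, μ.map (Z i) = radMeasure) (a : Fin n → ℝ)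
    {c : ℝ≥0} (hc : ∑ j, a j ^ 2 ≤ c) :
    HasSubgaussianMGF (fun ω ↦ ∑ j, Z j ω * a j) c μ := by
  have hsum := HasSubgaussianMGF.sum_of_iIndepFun (s := univ)
    (hindep.comp (fun j x ↦ a j * x) fun j ↦ measurable_const_mul (a j))
    fun j _ ↦
      (hasSubgaussianMGF_of_map_eq_radMeasure (hmeas j).aemeasurable (hlaw j)).const_mul (a j)
  refine (hsum.mono ?_).congr (ae_of_all _ fun ω ↦ ?_)
  · rw [← NNReal.coe_le_coe, NNReal.coe_sum]
    exact (sum_congr rfl fun j _ ↦ mul_one (a j ^ 2)).trans_le hc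
  · simp [mul_comm]

end Subgaussian

section Maximal

variable {ι Ω : Type*} [MeasurableSpace Ω] {μ : Measure Ω} {X : ι → Ω → ℝ} {s : Finset ι}

lemma exp_mul_sup'_abs_le_sum (hs : s.Nonempty) (x : ι → ℝ) {t : ℝ} (ht : 0 ≤ t) :
    exp (t * s.sup' hs (fun i ↦ |x i|)) ≤ ∑ i ∈ s, (exp (t * x i) + exp (-t * x i)) := by
  obtain ⟨i, hi, hmax⟩ := exists_mem_eq_sup' hs (fun i ↦ |x i|)
  calc exp (t * s.sup' hs (fun i ↦ |x i|)) = exp |t * x i| := by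
        rw [hmax, abs_mul, abs_of_nonneg ht]
    _ ≤ exp (t * x i) + exp (-t * x i) := by simpa only [neg_mul] using exp_abs_le (t * x i)
    _ ≤ ∑ i ∈ s, (exp (t * x i) + exp (-t * x i)) :=
        single_le_sum (f := fun i ↦ exp (t * x i) + exp (-t * x i)) (fun _ _ ↦ by positivity) hi

lemma integrable_sup'_abs (hs : s.Nonempty) (hX : ∀ i ∈ s, Integrable (X i) μ) :
    Integrable (fun ω ↦ s.sup' hs (fun i ↦ |X i ω|)) μ := by
  have : (fun ω ↦ s.sup' hs (fun i ↦ |X i ω|)) = s.sup' hs (fun i ω ↦ |X i ω|) :=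
    funext fun ω ↦ (Finset.sup'_apply hs (fun i ω ↦ |X i ω|) ω).symm
  rw [this]
  exact Finset.sup'_induction hs _ (p := (Integrable · μ)) (fun _ hf _ hg ↦ hf.sup hg)
    fun i hi ↦ (hX i hi).abs

variable [IsProbabilityMeasure μ] {c : ℝ≥0}

theorem integral_sup'_abs_le (hs : s.Nonempty) (hX : ∀ i ∈ s, HasSubgaussianMGF (X i) c μ)
    {t : ℝ} (ht : 0 < t) :
    ∫ ω, s.sup' hs (fun i ↦ |X i ω|) ∂μ ≤ log (2 * #s) / t + c * t / 2 := by
  set M := fun ω ↦ s.sup' hs (fun i ↦ |X i ω|)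
  set S := fun ω ↦ ∑ i ∈ s, (exp (t * X i ω) + exp (-t * X i ω))
  have hpair : ∀ i ∈ s, Integrable (fun ω ↦ exp (t * X i ω) + exp (-t * X i ω)) μ :=
    fun i hi ↦ ((hX i hi).integrable_exp_mul t).add ((hX i hi).integrable_exp_mul (-t))
  have hS_int : Integrable S μ := integrable_finsetSum _ hpair
  have hM_int : Integrable M μ := integrable_sup'_abs hs fun i hi ↦ (hX i hi).integrable
  have hM_le_S : ∀ ω, exp (t * M ω) ≤ S ω := fun ω ↦ exp_mul_sup'_abs_le_sum hs _ ht.le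
  have hexpM_int : Integrable (fun ω ↦ exp (t * M ω)) μ :=
    hS_int.mono' (continuous_exp.comp_aestronglyMeasurable (hM_int.const_mul t).1)
      (ae_of_all _ fun ω ↦ by simpa only [norm_of_nonneg (exp_pos _).le] using hM_le_S ω)
  have hjensen : exp (t * ∫ ω, M ω ∂μ) ≤ ∫ ω, exp (t * M ω) ∂μ := by
    rw [← integral_const_mul]
    exact convexOn_exp.map_integral_le continuousOn_exp isClosed_univ
      (ae_of_all _ fun _ ↦ Set.mem_univ _) (hM_int.const_mul t) hexpM_int
  have hS_le : ∫ ω, S ω ∂μ ≤ exp (log (2 * #s) + c * t ^ 2 / 2) := by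
    rw [integral_finsetSum _ hpair]
    calc ∑ i ∈ s, ∫ ω, (exp (t * X i ω) + exp (-t * X i ω)) ∂μ
        ≤ ∑ i ∈ s, 2 * exp (c * t ^ 2 / 2) := sum_le_sum fun i hi ↦ by
          rw [integral_add ((hX i hi).integrable_exp_mul t) ((hX i hi).integrable_exp_mul (-t))]
          have h₁ := (hX i hi).mgf_le t
          have h₂ := (hX i hi).mgf_le (-t)
          rw [neg_sq] at h₂
          simp only [mgf] at h₁ h₂
          linarith
      _ = exp (log (2 * #s) + c * t ^ 2 / 2) := by
          rw [sum_const, nsmul_eq_mul, exp_add, exp_log (by have := hs.card_pos; positivity)]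
          ring
  have key : t * ∫ ω, M ω ∂μ ≤ log (2 * #s) + c * t ^ 2 / 2 :=
    exp_le_exp.1 (hjensen.trans ((integral_mono hexpM_int hS_int hM_le_S).trans hS_le))
  rw [div_add' _ _ _ ht.ne', le_div_iff₀ ht]
  nlinarith

theorem integral_sup'_abs_le_of_card_le (hs : s.Nonempty) {σ : ℝ} (hσ : 0 < σ) {j : ℕ}
    (hcard : 2 * #s ≤ 4 ^ j) (hX : ∀ i ∈ s, HasSubgaussianMGF (X i) (σ ^ 2).toNNReal μ) :
    ∫ ω, s.sup' hs (fun i ↦ |X i ω|) ∂μ ≤ σ * (2 * j + 1) := by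
  have hlog : log (2 * #s) ≤ 2 * j := calc
    log (2 * #s) ≤ log (4 ^ j) :=
      log_le_log (by have := hs.card_pos; positivity) (by exact_mod_cast hcard)
    _ = j * (2 * log 2) := by
      rw [log_pow, show (4 : ℝ) = 2 ^ 2 by norm_num, log_pow]
      push_cast
      ring
    _ ≤ 2 * j := by nlinarith [log_two_lt_d9, j.cast_nonneg (α := ℝ)]
  refine (integral_sup'_abs_le hs hX (inv_pos.2 hσ)).trans ?_
  rw [Real.coe_toNNReal _ (sq_nonneg σ), div_inv_eq_mul]
  field_simp
  nlinarith

namespace Chaining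

variable (g : ℕ → ℝ) (m : ℕ)

noncomputable def lastLE (c : ℝ) : ℕ := ((range (m + 1)).filter (g · ≤ c)).sup id

lemma lastLE_le (c : ℝ) : lastLE g m c ≤ m :=
  Finset.sup_le fun _ ht ↦ Nat.lt_succ_iff.1 (mem_range.1 (mem_filter.1 ht).1)

variable {g m}

lemma le_lastLE {c : ℝ} {t : ℕ} (ht : t ≤ m) (hgt : g t ≤ c) : t ≤ lastLE g m c :=
  le_sup (f := id) (mem_filter.2 ⟨mem_range.2 (Nat.lt_succ_of_le ht), hgt⟩)

lemma apply_lastLE_le {c : ℝ} {t : ℕ} (ht : t ≤ m) (hgt : g t ≤ c) : g (lastLE g m c) ≤ c := by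
  have hne : ((range (m + 1)).filter (g · ≤ c)).Nonempty :=
    ⟨t, mem_filter.2 ⟨mem_range.2 (Nat.lt_succ_of_le ht), hgt⟩⟩
  obtain ⟨u, hu, hmax⟩ := exists_mem_eq_sup _ hne id
  rw [lastLE, hmax]
  exact (mem_filter.1 hu).2

lemma lastLE_mono {c c' : ℝ} (h : c ≤ c') : lastLE g m c ≤ lastLE g m c' :=
  sup_mono (monotone_filter_right _ fun _ _ hc ↦ hc.trans h)

variable (g m)

noncomputable def cell (k s : ℕ) : ℕ := ⌊g s / (g m / 4 ^ k)⌋₊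

/-- The level-`k` point of the chain through `s`: the last time before `g` leaves the grid cell
of `g s` of mesh `g m / 4 ^ k`. -/
noncomputable def chainPoint (k s : ℕ) : ℕ := lastLE g m ((cell g m k s + 1) * (g m / 4 ^ k))

noncomputable def links (k : ℕ) : Finset (ℕ × ℕ) :=
  (range (m + 1)).image fun s ↦ (chainPoint g m k s, chainPoint g m (k + 1) s)

variable {g m}

lemma le_chainPoint (hgm : 0 < g m) (k : ℕ) {s : ℕ} (hs : s ≤ m) : s ≤ chainPoint g m k s :=
  le_lastLE hs ((div_lt_iff₀ (by positivity)).1 (Nat.lt_floor_add_one _)).le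

lemma apply_chainPoint_le (hg0 : 0 ≤ g) (hgm : 0 < g m) (k : ℕ) {s : ℕ} (hs : s ≤ m) :
    g (chainPoint g m k s) ≤ g s + g m / 4 ^ k := by
  have hε : 0 < g m / 4 ^ k := by positivity
  have hcell : (cell g m k s : ℝ) * (g m / 4 ^ k) ≤ g s :=
    (le_div_iff₀ hε).1 (Nat.floor_le (div_nonneg (hg0 s) hε.le))
  calc g (chainPoint g m k s) ≤ (cell g m k s + 1) * (g m / 4 ^ k) :=
        apply_lastLE_le hs ((div_lt_iff₀ hε).1 (Nat.lt_floor_add_one _)).le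
    _ ≤ g s + g m / 4 ^ k := by linarith

lemma chainPoint_zero (hgm : 0 ≤ g m) {s : ℕ} : chainPoint g m 0 s = m :=
  le_antisymm (lastLE_le g m _) (le_lastLE le_rfl (by simp only [pow_zero, div_one]; nlinarith))

lemma cell_eq_cell_succ_div (k s : ℕ) : cell g m k s = cell g m (k + 1) s / 4 := by
  rw [cell, cell, ← Nat.floor_div_natCast]
  congr 1
  rw [pow_succ]
  push_cast
  field_simp

lemma cell_le (hg : Monotone g) (hgm : 0 < g m) (k : ℕ) {s : ℕ} (hs : s ≤ m) :
    cell g m k s ≤ 4 ^ k := by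
  refine Nat.floor_le_of_le ?_
  rw [div_le_iff₀ (by positivity)]
  push_cast
  have := hg hs
  field_simp
  linarith

lemma chainPoint_succ_le (hgm : 0 ≤ g m) (k s : ℕ) :
    chainPoint g m (k + 1) s ≤ chainPoint g m k s := by
  refine lastLE_mono ?_
  rw [cell_eq_cell_succ_div k s]
  set i := cell g m (k + 1) s
  have hi : (i : ℝ) + 1 ≤ 4 * (i / 4 : ℕ) + 4 := by
    exact_mod_cast (by omega : i + 1 ≤ 4 * (i / 4) + 4)
  calc ((i : ℝ) + 1) * (g m / 4 ^ (k + 1))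
      ≤ (4 * (i / 4 : ℕ) + 4) * (g m / 4 ^ (k + 1)) := by gcongr
    _ = ((i / 4 : ℕ) + 1) * (g m / 4 ^ k) := by rw [pow_succ]; field_simp

lemma chainPoint_eq_self (hg : Monotone g) (hg0 : 0 ≤ g) (hgm : 0 < g m) {K : ℕ}
    (hK : ∀ t < m, g t + g m / 4 ^ K < g (t + 1)) {s : ℕ} (hs : s ≤ m) :
    chainPoint g m K s = s := by
  refine le_antisymm ?_ (le_chainPoint hgm K hs)
  by_contra! hlt
  have := hg (Nat.succ_le_of_lt hlt)
  have := hK s (hlt.trans_le (lastLE_le g m _))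
  have := apply_chainPoint_le hg0 hgm K hs
  linarith

lemma links_nonempty (k : ℕ) : (links g m k).Nonempty := nonempty_range_add_one.image _

lemma mem_links {k s : ℕ} (hs : s ≤ m) :
    (chainPoint g m k s, chainPoint g m (k + 1) s) ∈ links g m k :=
  mem_image_of_mem _ (mem_range.2 (Nat.lt_succ_of_le hs))

lemma chainPoint_le (k s : ℕ) : chainPoint g m k s ≤ m := lastLE_le g m _

lemma apply_chainPoint_sub_le (hg : Monotone g) (hg0 : 0 ≤ g) (hgm : 0 < g m) (k : ℕ) {s : ℕ}
    (hs : s ≤ m) : g (chainPoint g m k s) - g (chainPoint g m (k + 1) s) ≤ g m / 4 ^ k := by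
  linarith [apply_chainPoint_le hg0 hgm k hs, hg (le_chainPoint hgm (k + 1) hs)]

/-- The level-`k` link of `s` only depends on the cell of `g s` at level `k + 1`. -/
lemma card_links_le (hg : Monotone g) (hgm : 0 < g m) (k : ℕ) :
    #(links g m k) ≤ 4 ^ (k + 1) + 1 := by
  let link (i : ℕ) : ℕ × ℕ :=
    (lastLE g m ((i / 4 + 1 : ℕ) * (g m / 4 ^ k)),
      lastLE g m ((i + 1 : ℕ) * (g m / 4 ^ (k + 1))))
  have hsub : links g m k ⊆ (range (4 ^ (k + 1) + 1)).image link := by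
    intro ab hab
    obtain ⟨s, hs, rfl⟩ := mem_image.1 hab
    refine mem_image.2 ⟨cell g m (k + 1) s,
      mem_range.2 (Nat.lt_succ_of_le (cell_le hg hgm _ (Nat.lt_succ_iff.1 (mem_range.1 hs)))), ?_⟩
    simp only [link, chainPoint, cell_eq_cell_succ_div k s]
    push_cast
    rfl
  exact (card_le_card hsub).trans (card_image_le.trans (card_range _).le)

lemma abs_le_add_sum_sup'_links (hg : Monotone g) (hg0 : 0 ≤ g) (hgm : 0 < g m) {K : ℕ}
    (hK : ∀ t < m, g t + g m / 4 ^ K < g (t + 1)) (Y : ℕ → ℝ) {s : ℕ} (hs : s ≤ m) :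
    |Y s| ≤ |Y m| + ∑ k ∈ range K, (links g m k).sup' (links_nonempty k)
      (fun ab ↦ |Y ab.1 - Y ab.2|) := by
  have htelescope : Y s = Y m + ∑ k ∈ range K,
      (Y (chainPoint g m (k + 1) s) - Y (chainPoint g m k s)) := by
    rw [sum_range_sub (fun k ↦ Y (chainPoint g m k s)), chainPoint_eq_self hg hg0 hgm hK hs,
      chainPoint_zero hgm.le]
    ring
  rw [htelescope]
  refine (abs_add_le _ _).trans (add_le_add_right ((abs_sum_le_sum_abs _ _).trans
    (sum_le_sum fun k _ ↦ ?_)) _)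
  rw [abs_sub_comm]
  exact le_sup' (fun ab : ℕ × ℕ ↦ |Y ab.1 - Y ab.2|) (mem_links hs)

end Chaining

lemma sum_sq_sub_le_sub_sum_sq {ι : Type*} (s : Finset ι) {u v : ι → ℝ} (hu : ∀ i, 0 ≤ u i)
    (huv : ∀ i, u i ≤ v i) : ∑ i ∈ s, (v i - u i) ^ 2 ≤ ∑ i ∈ s, v i ^ 2 - ∑ i ∈ s, u i ^ 2 := by
  rw [← sum_sub_distrib]
  exact sum_le_sum fun i _ ↦ by nlinarith [hu i, huv i]

section Stream

variable {n m : ℕ} (p : Fin m → Fin n)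

lemma freq_nonneg (t : ℕ) (j : Fin n) : 0 ≤ freq p t j := Nat.cast_nonneg _

lemma freq_mono : Monotone (freq p) := fun _ _ hst j ↦ by
  unfold freq
  gcongr

lemma freq_add_one_le {t : ℕ} (ht : t < m) :
    freq p t (p ⟨t, ht⟩) + 1 ≤ freq p (t + 1) (p ⟨t, ht⟩) := by
  unfold freq
  have hssub : (univ.filter fun t' : Fin m ↦ (t' : ℕ) < t ∧ p t' = p ⟨t, ht⟩) ⊂
      univ.filter fun t' : Fin m ↦ (t' : ℕ) < t + 1 ∧ p t' = p ⟨t, ht⟩ :=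
    (ssubset_iff_of_subset (monotone_filter_right _ fun _ _ h ↦
      ⟨h.1.trans t.lt_succ_self, h.2⟩)).2 ⟨⟨t, ht⟩, by simp, by simp⟩
  exact_mod_cast card_lt_card hssub

noncomputable def freqNormSq (t : ℕ) : ℝ := ∑ j, freq p t j ^ 2

lemma freqNormSq_nonneg : 0 ≤ freqNormSq p := fun _ ↦ sum_nonneg fun _ _ ↦ sq_nonneg _

lemma sum_sq_freq_sub_le {s t : ℕ} (hst : s ≤ t) :
    ∑ j, (freq p t j - freq p s j) ^ 2 ≤ freqNormSq p t - freqNormSq p s :=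
  sum_sq_sub_le_sub_sum_sq _ (freq_nonneg p s) (freq_mono p hst)

lemma monotone_freqNormSq : Monotone (freqNormSq p) := fun s t hst ↦ by
  have := sum_sq_freq_sub_le p hst
  have : 0 ≤ ∑ j, (freq p t j - freq p s j) ^ 2 := sum_nonneg fun _ _ ↦ sq_nonneg _
  linarith

lemma freqNormSq_add_one_le {t : ℕ} (ht : t < m) :
    freqNormSq p t + 1 ≤ freqNormSq p (t + 1) := by
  have hle : freq p t ≤ freq p (t + 1) := freq_mono p t.le_succ
  have hj := freq_add_one_le p ht
  have := freq_nonneg p t (p ⟨t, ht⟩)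
  have := single_le_sum (s := univ) (f := fun j ↦ freq p (t + 1) j ^ 2 - freq p t j ^ 2)
    (fun j _ ↦ by nlinarith [freq_nonneg p t j, hle j]) (mem_univ (p ⟨t, ht⟩))
  rw [sum_sub_distrib] at this
  unfold freqNormSq
  nlinarith

end Stream

lemma sum_range_two_mul_add_five_div_two_pow (K : ℕ) :
    ∑ k ∈ range K, (2 * k + 5 : ℝ) / 2 ^ k = 14 - (4 * K + 14) / 2 ^ K := by
  induction K with
  | zero => norm_num
  | succ K ih =>
    rw [sum_range_succ, ih, pow_succ]
    push_cast
    field_simp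
    ring

section SubgaussianChaining

open Chaining

variable {Ω : Type*} [MeasurableSpace Ω] {μ : Measure Ω} {Y : ℕ → Ω → ℝ} {g : ℕ → ℝ} {m : ℕ}

lemma hasSubgaussianMGF_of_mem_links (hg : Monotone g) (hg0 : 0 ≤ g) (hgm : 0 < g m)
    (hY : ∀ s t, s ≤ t → t ≤ m →
      HasSubgaussianMGF (fun ω ↦ Y t ω - Y s ω) (g t - g s).toNNReal μ)
    {k : ℕ} {ab : ℕ × ℕ} (hab : ab ∈ links g m k) :
    HasSubgaussianMGF (fun ω ↦ Y ab.1 ω - Y ab.2 ω) ((√(g m) / 2 ^ k) ^ 2).toNNReal μ := by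
  obtain ⟨s, hs, rfl⟩ := mem_image.1 hab
  have hs : s ≤ m := Nat.lt_succ_iff.1 (mem_range.1 hs)
  refine (hY _ _ (chainPoint_succ_le hgm.le k s) (chainPoint_le k s)).mono
    (Real.toNNReal_le_toNNReal ?_)
  rw [div_pow, sq_sqrt hgm.le, ← pow_mul, mul_comm, pow_mul]
  norm_num
  linarith [apply_chainPoint_sub_le hg hg0 hgm k hs]

variable [IsProbabilityMeasure μ]

lemma integral_sup'_links_le (hg : Monotone g) (hg0 : 0 ≤ g) (hgm : 0 < g m)
    (hY : ∀ s t, s ≤ t → t ≤ m →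
      HasSubgaussianMGF (fun ω ↦ Y t ω - Y s ω) (g t - g s).toNNReal μ) (k : ℕ) :
    ∫ ω, (links g m k).sup' (links_nonempty k) (fun ab ↦ |Y ab.1 ω - Y ab.2 ω|) ∂μ ≤
      √(g m) * ((2 * k + 5) / 2 ^ k) := by
  have hcard : 2 * #(links g m k) ≤ 4 ^ (k + 2) := by
    have := card_links_le hg hgm k
    have := Nat.one_le_pow k 4 (by norm_num)
    rw [pow_succ] at *
    omega
  refine (integral_sup'_abs_le_of_card_le (links_nonempty k) (by positivity) hcard
    fun ab hab ↦ hasSubgaussianMGF_of_mem_links hg hg0 hgm hY hab).trans_eq ?_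
  push_cast
  ring

theorem integral_sup'_abs_le_of_hasSubgaussianMGF_sub (hg : Monotone g) (hg0 : 0 ≤ g)
    (hgm : 0 < g m) {K : ℕ} (hK : ∀ t < m, g t + g m / 4 ^ K < g (t + 1))
    (hY : ∀ s t, s ≤ t → t ≤ m →
      HasSubgaussianMGF (fun ω ↦ Y t ω - Y s ω) (g t - g s).toNNReal μ)
    (hYm : HasSubgaussianMGF (Y m) (g m).toNNReal μ) :
    ∫ ω, (range (m + 1)).sup' nonempty_range_add_one (fun t ↦ |Y t ω|) ∂μ ≤ 17 * √(g m) := by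
  have hlevel_int : ∀ k, Integrable (fun ω ↦
      (links g m k).sup' (links_nonempty k) (fun ab ↦ |Y ab.1 ω - Y ab.2 ω|)) μ := fun k ↦
    integrable_sup'_abs _ fun _ hab ↦
      (hasSubgaussianMGF_of_mem_links hg hg0 hgm hY hab).integrable
  have htop : ∫ ω, |Y m ω| ∂μ ≤ √(g m) * 3 := by
    have := integral_sup'_abs_le_of_card_le (X := fun _ : Unit ↦ Y m) (singleton_nonempty ())
      (sqrt_pos.2 hgm) (j := 1) (by simp) fun _ _ ↦ by rwa [sq_sqrt hgm.le]
    norm_num at this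
    exact this
  have hgeom := sum_range_two_mul_add_five_div_two_pow K
  have hint := (hYm.integrable.abs).add (integrable_finsetSum (range K) fun k _ ↦ hlevel_int k)
  calc ∫ ω, (range (m + 1)).sup' nonempty_range_add_one (fun t ↦ |Y t ω|) ∂μ
      ≤ ∫ ω, (|Y m ω| + ∑ k ∈ range K,
          (links g m k).sup' (links_nonempty k) (fun ab ↦ |Y ab.1 ω - Y ab.2 ω|)) ∂μ :=
        integral_mono_of_nonneg
          (ae_of_all _ fun ω ↦ le_sup'_of_le _ (self_mem_range_succ m) (abs_nonneg _)) hint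
          (ae_of_all _ fun ω ↦ sup'_le _ _ fun s hs ↦ abs_le_add_sum_sup'_links hg hg0 hgm hK
            (Y · ω) (Nat.lt_succ_iff.1 (mem_range.1 hs)))
    _ = ∫ ω, |Y m ω| ∂μ + ∑ k ∈ range K, ∫ ω,
          (links g m k).sup' (links_nonempty k) (fun ab ↦ |Y ab.1 ω - Y ab.2 ω|) ∂μ := by
        rw [integral_add hYm.integrable.abs (integrable_finsetSum _ fun k _ ↦ hlevel_int k),
          integral_finsetSum _ fun k _ ↦ hlevel_int k]
    _ ≤ √(g m) * 3 + √(g m) * ∑ k ∈ range K, (2 * k + 5 : ℝ) / 2 ^ k := by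
        rw [mul_sum]
        exact add_le_add htop (sum_le_sum fun k _ ↦ integral_sup'_links_le hg hg0 hgm hY k)
    _ ≤ 17 * √(g m) := by
        have : 0 ≤ (4 * K + 14 : ℝ) / 2 ^ K := by positivity
        nlinarith [sqrt_nonneg (g m)]

end SubgaussianChaining

section RademacherStream

variable {n m : ℕ} (p : Fin m → Fin n) {Ω : Type*} [MeasurableSpace Ω] {μ : Measure Ω}
  {Z : Fin n → Ω → ℝ}

lemma hasSubgaussianMGF_sum_mul_freq (hmeas : ∀ i, Measurable (Z i)) (hindep : iIndepFun Z μ)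
    (hlaw : ∀ i, μ.map (Z i) = radMeasure) (t : ℕ) :
    HasSubgaussianMGF (fun ω ↦ ∑ j, Z j ω * freq p t j) (freqNormSq p t).toNNReal μ :=
  hasSubgaussianMGF_sum_mul hmeas hindep hlaw _ (Real.le_coe_toNNReal _)

lemma hasSubgaussianMGF_sum_mul_freq_sub (hmeas : ∀ i, Measurable (Z i))
    (hindep : iIndepFun Z μ) (hlaw : ∀ i, μ.map (Z i) = radMeasure) {s t : ℕ} (hst : s ≤ t) :
    HasSubgaussianMGF (fun ω ↦ ∑ j, Z j ω * freq p t j - ∑ j, Z j ω * freq p s j)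
      (freqNormSq p t - freqNormSq p s).toNNReal μ :=
  (hasSubgaussianMGF_sum_mul hmeas hindep hlaw (freq p t - freq p s)
    ((sum_sq_freq_sub_le p hst).trans (Real.le_coe_toNNReal _))).congr
    (ae_of_all _ fun ω ↦ by simp [mul_sub])

end RademacherStream

/-- **Chaining Inequality (Bernoulli/Rademacher case).** There is a universal constant
`C' > 0` such that for the frequency vectors of any insertion-only stream and i.i.d.
Rademacher variables `Z̄_1, …, Z̄_n`, the process `Y_t = ∑_j Z̄_j f_j^(t)` satisfies
`E[sup_{t ∈ [m]} |Y_t|] ≤ C' ‖f^(m)‖₂`. -/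
theorem chaining_inequality_bernoulli :
    ∃ C' : ℝ, 0 < C' ∧
      ∀ (n m : ℕ), 0 < m →
      ∀ (p : Fin m → Fin n) (Ω : Type) [MeasurableSpace Ω] (μ : Measure Ω)
        [IsProbabilityMeasure μ] (Z : Fin n → Ω → ℝ),
        (∀ i, Measurable (Z i)) →
        iIndepFun Z μ →
        (∀ i, Measure.map (Z i) μ = radMeasure) →
        (∫ ω, (⨆ t : Fin m, |∑ j, Z j ω * freq p ((t : ℕ) + 1) j|) ∂μ)
          ≤ C' * l2norm (freq p m) := by
  refine ⟨17, by norm_num, fun n m hm p Ω _ μ _ Z hmeas hindep hlaw ↦ ?_⟩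
  have : Nonempty (Fin m) := ⟨⟨0, hm⟩⟩
  have hgm : 1 ≤ freqNormSq p m := by
    have h₀ : 0 ≤ freqNormSq p 0 := freqNormSq_nonneg p 0
    linarith [freqNormSq_add_one_le p hm, monotone_freqNormSq p (Nat.succ_le_of_lt hm)]
  obtain ⟨K, hK⟩ := pow_unbounded_of_one_lt (freqNormSq p m) (by norm_num : (1 : ℝ) < 4)
  have hgap : ∀ t < m, freqNormSq p t + freqNormSq p m / 4 ^ K < freqNormSq p (t + 1) :=
    fun t ht ↦ by linarith [freqNormSq_add_one_le p ht, (div_lt_one (by positivity)).2 hK]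
  have hint := integrable_sup'_abs (μ := μ) (nonempty_range_add_one (n := m)) fun t _ ↦
    (hasSubgaussianMGF_sum_mul_freq p hmeas hindep hlaw t).integrable
  calc ∫ ω, (⨆ t : Fin m, |∑ j, Z j ω * freq p ((t : ℕ) + 1) j|) ∂μ
      ≤ ∫ ω, (range (m + 1)).sup' nonempty_range_add_one
          (fun t ↦ |∑ j, Z j ω * freq p t j|) ∂μ :=
        integral_mono_of_nonneg (ae_of_all _ fun ω ↦ Real.iSup_nonneg fun _ ↦ abs_nonneg _) hint
          (ae_of_all _ fun ω ↦ ciSup_le fun t ↦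
            le_sup' (fun t ↦ |∑ j, Z j ω * freq p t j|) (mem_range.2 (by omega)))
    _ ≤ 17 * l2norm (freq p m) :=
        integral_sup'_abs_le_of_hasSubgaussianMGF_sub (monotone_freqNormSq p)
          (freqNormSq_nonneg p) (by linarith) hgap
          (fun _ _ hst _ ↦ hasSubgaussianMGF_sum_mul_freq_sub p hmeas hindep hlaw hst)
          (hasSubgaussianMGF_sum_mul_freq p hmeas hindep hlaw m)
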